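/- arXiv:math/9903125 — 2 statements merged into one kernel-verified Lean document; each statement's English description precedes it below -/
import Mathlib

section
/- Let c, d, e, h ∈ ℝ and let D := -(1/18)(c²+de)²(c²-de-2eh)²(c²+de+2cd+2ch)² and C₃ := (2/3)(c+h)(2ceh-2c³-c²e-de²). If D ≠ 0 and C₃ = 0, then c+h = 0 if and only if (c+h)²(c²-eh) = 0. -/
theorem stmt_4 (c d e h : ℝ)
    (hD : -(1/18) * (c^2 + d*e)^2 * (c^2 - d*e - 2*e*h)^2 * (c^2 + d*e + 2*c*d + 2*c*h)^2 ≠ 0)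
    (hC3 : (2/3) * (c + h) * (2*c*e*h - 2*c^3 - c^2*e - d*e^2) = 0) :
    (-(c + h)^2 * (c^2 - e*h) = 0) ↔ c + h = 0 := by
  have h1 : c^2 + d*e ≠ 0 := fun h0 => hD (by rw [h0]; ring_nf)
  constructor
  · intro H
    by_contra hch
    have h2 : c^2 - e*h = 0 := by
      rcases mul_eq_zero.mp H with h' | h'
      · exact absurd (pow_eq_zero_iff (two_ne_zero)|>.mp (neg_eq_zero.mp h')) hch
      · exact h'
    have h3 : 2*c*e*h - 2*c^3 - c^2*e - d*e^2 = 0 := by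
      rcases mul_eq_zero.mp hC3 with h' | h'
      · rcases mul_eq_zero.mp h' with h'' | h''
        · norm_num at h''
        · exact absurd h'' hch
      · exact h'
    have heh : e * h = c^2 := by linarith
    have h4 : e * (c^2 + d*e) = 0 := by linear_combination -h3 + 2*c*heh
    rcases mul_eq_zero.mp h4 with he | hde
    · have hc2 : c^2 = 0 := by rw [he] at h2; linarith
      have hc : c = 0 := pow_eq_zero_iff two_ne_zero |>.mp hc2
      apply h1; rw [hc, he]; ring
    · exact h1 hde
  · intro H; rw [H]; ring
end

section
/- Let m, u ∈ ℝ. The three polynomial conditions (5u+12m+9)(7u+12m) = 0, 48m³+32m²u+36m²+9mu²+9mu+5u³-7u² = 0, and u(u+m)³(2u+3m)(u+2m+1)² ≠ 0 cannot hold simultaneously. -/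
theorem stmt_9 (m u : ℝ) :
    ¬ ((5*u+12*m+9)*(7*u+12*m) = 0 ∧
       48*m^3 + 32*m^2*u + 36*m^2 + 9*m*u^2 + 9*m*u + 5*u^3 - 7*u^2 = 0 ∧
       u*(u+m)^3*(2*u+3*m)*(u+2*m+1)^2 ≠ 0) := by
  rintro ⟨h1, h2, h3⟩
  have hu : u ≠ 0 := by
    intro h; apply h3; rw [h]; ring
  have hw : u + 2*m + 1 ≠ 0 := by
    intro h; apply h3
    linear_combination (u*(u+m)^3*(2*u+3*m)*(u+2*m+1)) * h
  rcases mul_eq_zero.mp h1 with hc | hc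
  · -- 5u+12m+9 = 0 : then u^2*(u-3) = 0
    have h3u : u^2 * (u - 3) = 0 := by
      linear_combination (3/10 : ℝ) * h2 - (3/10 : ℝ) * (4*m^2 + m*u + u^2/3) * hc
    rcases mul_eq_zero.mp h3u with h | h
    · exact hu (pow_eq_zero_iff (n := 2) (by norm_num) |>.mp h)
    · have hu3 : u = 3 := by linarith
      have hm : m = -2 := by rw [hu3] at hc; linarith
      apply hw; rw [hu3, hm]; ring
  · -- 7u+12m = 0 : then u^3 = 0
    have h3u : u ^ 3 = 0 := by
      linear_combination (9/10 : ℝ) * h2 -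
        (9/10 : ℝ) * (4*m^2 + m*u/3 + 3*m + 5*u^2/9 - u) * hc
    exact hu (pow_eq_zero_iff (n := 3) (by norm_num) |>.mp h3u)
end
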